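/- arXiv:2407.07907 — 9 statements merged into one kernel-verified Lean document; each statement's English description precedes it below -/
import Mathlib

section
/- Let m,n > 1 be integers and X = ℤ/(m) × ℤ/(n) × ℤ/(m). For (a,b,c) ∈ X define σ_{(a,b,c)}(x,y,z) = (x−c, y−1, z−δ_{(a,b),(x−c,y−1)}), where δ denotes the Kronecker delta. Then for all (a,b,c),(x,y,z) ∈ X, the identity σ⁻¹_{σ⁻¹_{(a,b,c)}(x,y,z)} ∘ σ⁻¹_{(a,b,c)} = σ⁻¹_{σ⁻¹_{(x,y,z)}(a,b,c)} ∘ σ⁻¹_{(x,y,z)} holds as maps on X. -/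
/-- `σ_{(a,b,c)}(x,y,z) = (x−c, y−1, z−δ_{(a,b),(x−c,y−1)})` on `ℤ/(m) × ℤ/(n) × ℤ/(m)`. -/
def sigmaMN (m n : ℕ) (p q : ZMod m × ZMod n × ZMod m) : ZMod m × ZMod n × ZMod m :=
  (q.1 - p.2.2, q.2.1 - 1,
    q.2.2 - if (p.1, p.2.1) = (q.1 - p.2.2, q.2.1 - 1) then 1 else 0)

/-- `σ⁻¹_{(a,b,c)}(x,y,z) = (x+c, y+1, z+δ_{(a,b),(x,y)})`. -/
def sigmaMNInv (m n : ℕ) (p q : ZMod m × ZMod n × ZMod m) : ZMod m × ZMod n × ZMod m :=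
  (q.1 + p.2.2, q.2.1 + 1,
    q.2.2 + if (p.1, p.2.1) = (q.1, q.2.1) then 1 else 0)

/-- `(Y,s)` is an involutive non-degenerate set-theoretic solution of the YBE. -/
def IsYBSolution {Y : Type*} (s : Y × Y → Y × Y) : Prop :=
  (∀ x : Y, Function.Bijective fun y => (s (x, y)).1) ∧
  (∀ y : Y, Function.Bijective fun x => (s (x, y)).2) ∧
  (s ∘ s = id) ∧
  ((fun t : Y × Y × Y => ((s (t.1, t.2.1)).1, (s (t.1, t.2.1)).2, t.2.2)) ∘
      (fun t : Y × Y × Y => (t.1, (s (t.2.1, t.2.2)).1, (s (t.2.1, t.2.2)).2)) ∘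
      (fun t : Y × Y × Y => ((s (t.1, t.2.1)).1, (s (t.1, t.2.1)).2, t.2.2)) =
    (fun t : Y × Y × Y => (t.1, (s (t.2.1, t.2.2)).1, (s (t.2.1, t.2.2)).2)) ∘
      (fun t : Y × Y × Y => ((s (t.1, t.2.1)).1, (s (t.1, t.2.1)).2, t.2.2)) ∘
      (fun t : Y × Y × Y => (t.1, (s (t.2.1, t.2.2)).1, (s (t.2.1, t.2.2)).2)))

/-- A solution `(Z,r)` is simple: `|Z| > 1` and every epimorphism of solutions from
`(Z,r)` is either an isomorphism or onto a singleton. -/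
def IsSimpleSolution {Z : Type*} (r : Z × Z → Z × Z) : Prop :=
  Nontrivial Z ∧
  ∀ (Y : Type) (s : Y × Y → Y × Y), IsYBSolution s →
    ∀ f : Z → Y, Function.Surjective f →
      (∀ x y : Z, f ((r (x, y)).1) = (s (f x, f y)).1) →
      Function.Bijective f ∨ Subsingleton Y

/-- The cycle identity for the inverse maps. -/
theorem sigmaMN_cycle (m n : ℕ) (hm : 1 < m) (hn : 1 < n)
    (p q : ZMod m × ZMod n × ZMod m) :
    (sigmaMNInv m n (sigmaMNInv m n p q)) ∘ (sigmaMNInv m n p) =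
      (sigmaMNInv m n (sigmaMNInv m n q p)) ∘ (sigmaMNInv m n q) := by
  funext w
  have hδ : (if p.1 = q.1 ∧ p.2.1 = q.2.1 then (1 : ZMod m) else 0)
      = (if q.1 = p.1 ∧ q.2.1 = p.2.1 then 1 else 0) := by
    by_cases h : p.1 = q.1 ∧ p.2.1 = q.2.1 <;> simp_all [eq_comm]
  simp only [Function.comp_apply, sigmaMNInv, Prod.mk.injEq, add_left_inj]
  refine ⟨?_, trivial, ?_⟩
  · rw [hδ]; ring
  · ring
end

section
/- Let m,n > 1 be integers and X = ℤ/(m) × ℤ/(n) × ℤ/(m), with σ_{(a,b,c)}(x,y,z) = (x−c, y−1, z−δ_{(a,b),(x−c,y−1)}) and r((a,b,c),(x,y,z)) = (σ_{(a,b,c)}(x,y,z), σ⁻¹_{σ_{(a,b,c)}(x,y,z)}(a,b,c)). Then (X,r) is an involutive non-degenerate set-theoretic solution of the Yang–Baxter equation. -/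
private lemma sigma_left_inv (m n : ℕ) (p q : ZMod m × ZMod n × ZMod m) :
    sigmaMNInv m n p (sigmaMN m n p q) = q := by
  obtain ⟨a, b, c⟩ := p; obtain ⟨u, v, w⟩ := q
  simp only [sigmaMN, sigmaMNInv, Prod.mk.injEq]
  refine ⟨by ring, by ring, ?_⟩
  split_ifs <;> simp_all

private lemma sigma_right_inv (m n : ℕ) (p q : ZMod m × ZMod n × ZMod m) :
    sigmaMN m n p (sigmaMNInv m n p q) = q := by
  obtain ⟨a, b, c⟩ := p; obtain ⟨u, v, w⟩ := q
  simp only [sigmaMN, sigmaMNInv, Prod.mk.injEq]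
  refine ⟨by ring, by ring, ?_⟩
  split_ifs <;> simp_all

/-- explicit inverse of `γ_q : p ↦ σ⁻¹_{σ_p q} p` -/
def gammaInv (m n : ℕ) (q r : ZMod m × ZMod n × ZMod m) : ZMod m × ZMod n × ZMod m :=
  (r.1 - q.2.2 + (if (r.1 - q.2.2, r.2.1 - 1) = (q.1 - r.2.2, q.2.1 - 1) then 1 else 0),
   r.2.1 - 1,
   r.2.2 - if (r.1 - q.2.2, r.2.1 - 1) = (q.1 - r.2.2, q.2.1 - 1) then 1 else 0)

private lemma gamma_left_inv (m n : ℕ) (q p : ZMod m × ZMod n × ZMod m) :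
    gammaInv m n q (sigmaMNInv m n (sigmaMN m n p q) p) = p := by
  obtain ⟨a, b, c⟩ := p; obtain ⟨u, v, w⟩ := q
  simp only [sigmaMN, sigmaMNInv, gammaInv, Prod.mk.injEq]
  have e1 : (if u - c = a ∧ v - 1 = b then (1 : ZMod m) else 0) =
      (if a = u - c ∧ b = v - 1 then 1 else 0) := if_congr (and_congr eq_comm eq_comm) rfl rfl
  simp only [e1]
  set D : ZMod m := if a = u - c ∧ b = v - 1 then 1 else 0 with hD
  have k : (if a + (w - D) - w = u - (c + D) ∧ b + 1 - 1 = v - 1 then (1 : ZMod m) else 0)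
      = D := by
    rw [hD]
    refine if_congr ⟨?_, ?_⟩ rfl rfl <;> rintro ⟨h1, h2⟩ <;>
      exact ⟨by first | linear_combination h1 | linear_combination -h1, by first | linear_combination h2 | linear_combination -h2⟩
  simp only [k]
  refine ⟨by ring, by ring, by ring⟩

private lemma gamma_right_inv (m n : ℕ) (q r : ZMod m × ZMod n × ZMod m) :
    sigmaMNInv m n (sigmaMN m n (gammaInv m n q r) q) (gammaInv m n q r) = r := by
  obtain ⟨A, B, C⟩ := r; obtain ⟨u, v, w⟩ := q
  simp only [sigmaMN, sigmaMNInv, gammaInv, Prod.mk.injEq]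
  set d : ZMod m := if A - w = u - C ∧ B - 1 = v - 1 then 1 else 0 with hd
  have k1 : (if A - w + d = u - (C - d) ∧ B - 1 = v - 1 then (1 : ZMod m) else 0) = d := by
    rw [hd]
    refine if_congr ⟨?_, ?_⟩ rfl rfl <;> rintro ⟨h1, h2⟩ <;>
      exact ⟨by linear_combination h1, h2⟩
  have k2 : (if u - (C - d) = A - w + d ∧ v - 1 = B - 1 then (1 : ZMod m) else 0) = d := by
    rw [hd]
    refine if_congr ⟨?_, ?_⟩ rfl rfl <;> rintro ⟨h1, h2⟩ <;>
      exact ⟨by linear_combination -h1, by linear_combination -h2⟩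
  simp only [k1, k2]
  refine ⟨by ring, by ring, by ring⟩


/-- `(X,r)` with `r((a,b,c),(x,y,z)) = (σ_{(a,b,c)}(x,y,z), σ⁻¹_{σ_{(a,b,c)}(x,y,z)}(a,b,c))`
is an involutive non-degenerate set-theoretic solution of the YBE. -/
theorem sigmaMN_isSolution (m n : ℕ) (hm : 1 < m) (hn : 1 < n) :
    IsYBSolution (fun t : (ZMod m × ZMod n × ZMod m) × (ZMod m × ZMod n × ZMod m) =>
      (sigmaMN m n t.1 t.2, sigmaMNInv m n (sigmaMN m n t.1 t.2) t.1)) := by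
  refine ⟨?_, ?_, ?_, ?_⟩
  · intro p
    exact Function.bijective_iff_has_inverse.mpr
      ⟨sigmaMNInv m n p, fun q => sigma_left_inv m n p q, fun q => sigma_right_inv m n p q⟩
  · intro q
    exact Function.bijective_iff_has_inverse.mpr
      ⟨gammaInv m n q, fun p => gamma_left_inv m n q p, fun r => gamma_right_inv m n q r⟩
  · funext t
    obtain ⟨p, q⟩ := t
    show (sigmaMN m n (sigmaMN m n p q) (sigmaMNInv m n (sigmaMN m n p q) p), _) = _
    rw [Function.id_def]
    have h1 : sigmaMN m n (sigmaMN m n p q) (sigmaMNInv m n (sigmaMN m n p q) p) = p :=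
      sigma_right_inv m n (sigmaMN m n p q) p
    rw [h1, sigma_left_inv]
  · funext t
    obtain ⟨⟨a, b, c⟩, ⟨u, v, w⟩, x, y, z⟩ := t
    simp only [Function.comp_apply, sigmaMN, sigmaMNInv, Prod.mk.injEq]
    have e1 : (if u - c = a ∧ v - 1 = b then (1 : ZMod m) else 0) =
        (if a = u - c ∧ b = v - 1 then 1 else 0) := if_congr (and_congr eq_comm eq_comm) rfl rfl
    have e2 : (if x - w = u ∧ y - 1 = v then (1 : ZMod m) else 0) =
        (if u = x - w ∧ v = y - 1 then 1 else 0) := if_congr (and_congr eq_comm eq_comm) rfl rfl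
    have e3 : (if x - w - c = a ∧ y - 1 - 1 = b then (1 : ZMod m) else 0) =
        (if a = x - w - c ∧ b = y - 1 - 1 then 1 else 0) :=
      if_congr (and_congr eq_comm eq_comm) rfl rfl
    simp only [e1, e2, e3]
    set D : ZMod m := if a = u - c ∧ b = v - 1 then 1 else 0 with hD
    set E : ZMod m := if u = x - w ∧ v = y - 1 then 1 else 0 with hE
    set F : ZMod m := if a = x - w - c ∧ b = y - 1 - 1 then 1 else 0 with hF
    have hC1 : (if a + (w - D) = x - (c + D) ∧ b + 1 = y - 1 then (1 : ZMod m) else 0) = F := by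
      rw [hF]
      refine if_congr ⟨?_, ?_⟩ rfl rfl <;> rintro ⟨h1, h2⟩ <;>
        exact ⟨by first | linear_combination h1 | linear_combination -h1, by first | linear_combination h2 | linear_combination -h2⟩
    have hC2 : (if u - c = x - (c + D) - (w - D) ∧ v - 1 = y - 1 - 1 then (1 : ZMod m) else 0)
        = E := by
      rw [hE]
      refine if_congr ⟨?_, ?_⟩ rfl rfl <;> rintro ⟨h1, h2⟩ <;>
        exact ⟨by first | linear_combination h1 | linear_combination -h1, by first | linear_combination h2 | linear_combination -h2⟩
    have hC4 : (if x - (c + D) - (w - D) = u - c ∧ y - 1 - 1 = v - 1 then (1 : ZMod m) else 0)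
        = E := by
      rw [hE]
      refine if_congr ⟨?_, ?_⟩ rfl rfl <;> rintro ⟨h1, h2⟩ <;>
        exact ⟨by first | linear_combination h1 | linear_combination -h1, by first | linear_combination h2 | linear_combination -h2⟩
    have hC5 : (if a + (z - E - F) = u + (z - E) - (c + F) ∧ b + 1 = v + 1 - 1
        then (1 : ZMod m) else 0) = D := by
      rw [hD]
      refine if_congr ⟨?_, ?_⟩ rfl rfl <;> rintro ⟨h1, h2⟩ <;>
        exact ⟨by first | linear_combination h1 | linear_combination -h1, by first | linear_combination h2 | linear_combination -h2⟩
    have hC6 : (if x - (c + D) = a + (w - D) ∧ y - 1 = b + 1 then (1 : ZMod m) else 0) = F := by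
      rw [hF]
      refine if_congr ⟨?_, ?_⟩ rfl rfl <;> rintro ⟨h1, h2⟩ <;>
        exact ⟨by first | linear_combination h1 | linear_combination -h1, by first | linear_combination h2 | linear_combination -h2⟩
    have hC7 : (if u + (z - E) - (c + F) = a + (z - E - F) ∧ v + 1 - 1 = b + 1
        then (1 : ZMod m) else 0) = D := by
      rw [hD]
      refine if_congr ⟨?_, ?_⟩ rfl rfl <;> rintro ⟨h1, h2⟩ <;>
        exact ⟨by first | linear_combination h1 | linear_combination -h1, by first | linear_combination h2 | linear_combination -h2⟩
    simp only [hC1, hC2, hC4, hC5, hC6, hC7]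
    refine ⟨⟨by ring, trivial, by ring⟩, ⟨by ring, by ring, by ring⟩, by ring, trivial, by ring⟩
end

section
/- Let m,n > 1 and X = ℤ/(m) × ℤ/(n) × ℤ/(m) with σ_{(a,b,c)}(x,y,z) = (x−c, y−1, z−δ_{(a,b),(x−c,y−1)}). The permutation group G(X,r) = ⟨σ_{(a,b,c)} : (a,b,c) ∈ X⟩ acts transitively on X; that is, the solution (X,r) is indecomposable. -/
/-
The generator `σ_{(a,b,c)}` moves `(x,y,z)` to `(x-c, y-1, z-e)`, where `e = 1` if `(a,b)` is
chosen to be `(x-c, y-1)` and `e = 0` for any other choice of `(a,b)`. Comparing the two choices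
and using `c = 0`, the orbits are invariant under each of the shifts `y ↦ y-1`, `z ↦ z-1` and
`x ↦ x-c`; since `ℤ/(n)` and `ℤ/(m)` are generated by `1`, there is a single orbit.
-/

open MulAction

variable {m n : ℕ}

def sigmaPerm (m n : ℕ) (p : ZMod m × ZMod n × ZMod m) :
    Equiv.Perm (ZMod m × ZMod n × ZMod m) where
  toFun := sigmaMN m n p
  invFun := sigmaMNInv m n p
  left_inv q := by simp [sigmaMN, sigmaMNInv]
  right_inv q := by simp [sigmaMN, sigmaMNInv]

def sigmaGroup (m n : ℕ) : Subgroup (Equiv.Perm (ZMod m × ZMod n × ZMod m)) :=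
  Subgroup.closure {g | ∃ p, ∀ q, g q = sigmaMN m n p q}

theorem sigmaPerm_mem_sigmaGroup (p : ZMod m × ZMod n × ZMod m) :
    sigmaPerm m n p ∈ sigmaGroup m n :=
  Subgroup.subset_closure ⟨p, fun _ => rfl⟩

theorem orbit_sigmaMN (p q : ZMod m × ZMod n × ZMod m) :
    orbit (sigmaGroup m n) (sigmaMN m n p q) = orbit (sigmaGroup m n) q :=
  orbit_smul (⟨sigmaPerm m n p, sigmaPerm_mem_sigmaGroup p⟩ : sigmaGroup m n) q

theorem orbit_sub_sub_one [Nontrivial (ZMod m × ZMod n)] (x c : ZMod m) (y : ZMod n)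
    (z : ZMod m) :
    orbit (sigmaGroup m n) (x - c, y - 1, z) = orbit (sigmaGroup m n) (x, y, z) := by
  obtain ⟨ab, hab⟩ := exists_ne (x - c, y - 1)
  simpa [sigmaMN, hab] using orbit_sigmaMN (ab.1, ab.2, c) (x, y, z)

theorem orbit_sub_sub_one_sub_one (x c : ZMod m) (y : ZMod n) (z : ZMod m) :
    orbit (sigmaGroup m n) (x - c, y - 1, z - 1) = orbit (sigmaGroup m n) (x, y, z) := by
  have h := orbit_sigmaMN (x - c, y - 1, c) (x, y, z)
  simp only [sigmaMN] at h
  rwa [if_pos trivial] at h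

section Shifts

variable [Nontrivial (ZMod m × ZMod n)] (x : ZMod m) (y : ZMod n) (z : ZMod m)

theorem orbit_fst_sub (c : ZMod m) :
    orbit (sigmaGroup m n) (x - c, y, z) = orbit (sigmaGroup m n) (x, y, z) := by
  rw [← orbit_sub_sub_one (x - c) 0, ← orbit_sub_sub_one x c, sub_zero]

theorem orbit_snd_sub_one :
    orbit (sigmaGroup m n) (x, y - 1, z) = orbit (sigmaGroup m n) (x, y, z) := by
  simpa using orbit_sub_sub_one x 0 y z

theorem orbit_snd_snd_sub_one :
    orbit (sigmaGroup m n) (x, y, z - 1) = orbit (sigmaGroup m n) (x, y, z) := by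
  rw [← orbit_snd_sub_one x y (z - 1), ← orbit_sub_sub_one_sub_one x 0 y z, sub_zero]

end Shifts

theorem orbit_apply_sub_eq_of_sub_one {G α : Type*} [Group G] [MulAction G α] {N : ℕ} [NeZero N]
    (f : ZMod N → α) (h : ∀ a, orbit G (f (a - 1)) = orbit G (f a)) (a b : ZMod N) :
    orbit G (f (a - b)) = orbit G (f a) := by
  obtain ⟨k, rfl⟩ := ZMod.natCast_zmod_surjective b
  induction k with
  | zero => simp
  | succ k ih => rw [Nat.cast_succ, ← sub_sub, h, ih]

/-- The permutation group `⟨σ_{(a,b,c)}⟩` acts transitively on `X`: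
the solution is indecomposable. -/
theorem sigmaMN_indecomposable (m n : ℕ) (hm : 1 < m) (hn : 1 < n) :
    ∀ u v : ZMod m × ZMod n × ZMod m,
      ∃ g ∈ Subgroup.closure
          {g : Equiv.Perm (ZMod m × ZMod n × ZMod m) | ∃ p, ∀ q, g q = sigmaMN m n p q},
        g u = v := by
  have : Fact (1 < m) := ⟨hm⟩
  have : NeZero n := ⟨by omega⟩
  rintro ⟨x, y, z⟩ ⟨x', y', z'⟩
  have horbit : orbit (sigmaGroup m n) (x', y', z') = orbit (sigmaGroup m n) (x, y, z) :=
    calc orbit (sigmaGroup m n) (x', y', z')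
        = orbit (sigmaGroup m n) (x - (x - x'), y - (y - y'), z - (z - z')) := by
          simp only [sub_sub_cancel]
      _ = orbit (sigmaGroup m n) (x, y - (y - y'), z - (z - z')) := orbit_fst_sub ..
      _ = orbit (sigmaGroup m n) (x, y, z - (z - z')) :=
          orbit_apply_sub_eq_of_sub_one (fun b => (x, b, _)) (orbit_snd_sub_one x · _) ..
      _ = orbit (sigmaGroup m n) (x, y, z) :=
          orbit_apply_sub_eq_of_sub_one (fun c => (x, y, c)) (orbit_snd_snd_sub_one x y ·) ..
  obtain ⟨⟨g, hg⟩, hgu⟩ := orbit_eq_iff.mp horbit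
  exact ⟨g, hg, hgu⟩
end

section
/- Let m,n > 1 and X = ℤ/(m) × ℤ/(n) × ℤ/(m) with σ_{(a,b,c)}(x,y,z) = (x−c, y−1, z−δ_{(a,b),(x−c,y−1)}). If σ_{(a,b,c)} = σ_{(a',b',c')} as maps X → X, then (a,b,c) = (a',b',c'); that is, the solution (X,r) is irretractable. -/
/-- If `σ_{(a,b,c)} = σ_{(a',b',c')}` then `(a,b,c) = (a',b',c')`:
the solution is irretractable. -/
theorem sigmaMN_irretractable (m n : ℕ) (hm : 1 < m) (hn : 1 < n)
    (p p' : ZMod m × ZMod n × ZMod m) (h : sigmaMN m n p = sigmaMN m n p') :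
    p = p' := by
  obtain ⟨a, b, c⟩ := p
  obtain ⟨a', b', c'⟩ := p'
  have hc : c = c' := by
    have h1 := congrArg Prod.fst (congrFun h (0, 0, 0))
    simp only [sigmaMN] at h1
    linear_combination -h1
  subst hc
  have h2 := congrArg (fun t => t.2.2) (congrFun h (a + c, b + 1, 0))
  simp only [sigmaMN, add_sub_cancel_right, Prod.mk.injEq] at h2
  have hone : (1 : ZMod m) ≠ 0 := by
    haveI : Fact (1 < m) := ⟨hm⟩
    exact one_ne_zero
  by_cases hab : a' = a ∧ b' = b
  · obtain ⟨ha, hb⟩ := hab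
    simp [ha, hb]
  · rw [if_pos trivial, if_neg hab] at h2
    exact absurd (by linear_combination -h2 : (1 : ZMod m) = 0) hone
end

section
/- Let m,n > 1 and X = ℤ/(m) × ℤ/(n) × ℤ/(m) with σ_{(a,b,c)}(x,y,z) = (x−c, y−1, z−δ_{(a,b),(x−c,y−1)}). The map f : X → ℤ/(n), f(a,b,c) = b, satisfies f(σ_{(a,b,c)}(x,y,z)) = σ'_{f(a,b,c)}(f(x,y,z)) where σ'_i(j) = j−1; hence f is a surjective homomorphism of solutions from (X,r) onto (ℤ/(n), s) with s(i,j) = (j−1, i+1). In particular (X,r) is not a simple solution. -/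
theorem isYBSolution_shift {G : Type*} [AddGroup G] (g : G) :
    IsYBSolution (fun t : G × G => (t.2 - g, t.1 + g)) := by
  refine ⟨fun _ => (Equiv.subRight g).bijective, fun _ => (Equiv.addRight g).bijective,
    ?_, ?_⟩ <;>
  funext t <;> simp

theorem not_isSimpleSolution_of_surjective_of_not_injective {Z : Type*} {Y : Type}
    {r : Z × Z → Z × Z} {s : Y × Y → Y × Y} (hs : IsYBSolution s) [Nontrivial Y]
    (f : Z → Y) (hsurj : Function.Surjective f) (hinj : ¬ Function.Injective f)
    (hhom : ∀ x y : Z, f ((r (x, y)).1) = (s (f x, f y)).1) :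
    ¬ IsSimpleSolution r := fun ⟨_, hsimple⟩ =>
  (hsimple Y s hs f hsurj hhom).elim (fun hbij => hinj hbij.1) fun _ => not_subsingleton Y ‹_›

/-- The map `f(a,b,c) = b` is a surjective homomorphism of solutions onto
`(ℤ/(n), s)` with `s(i,j) = (j−1, i+1)`; in particular `(X,r)` is not simple. -/
theorem sigmaMN_not_simple (m n : ℕ) (hm : 1 < m) (hn : 1 < n) :
    (∀ p q : ZMod m × ZMod n × ZMod m,
      (sigmaMN m n p q).2.1 =
        ((fun t : ZMod n × ZMod n => (t.2 - 1, t.1 + 1)) (p.2.1, q.2.1)).1) ∧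
    Function.Surjective (fun q : ZMod m × ZMod n × ZMod m => q.2.1) ∧
    ¬ IsSimpleSolution (fun t : (ZMod m × ZMod n × ZMod m) × (ZMod m × ZMod n × ZMod m) =>
        (sigmaMN m n t.1 t.2, sigmaMNInv m n (sigmaMN m n t.1 t.2) t.1)) := by
  have : Nontrivial (ZMod m) := ZMod.nontrivial_iff.mpr hm.ne'
  have : Nontrivial (ZMod n) := ZMod.nontrivial_iff.mpr hn.ne'
  have hsurj : Function.Surjective (fun q : ZMod m × ZMod n × ZMod m => q.2.1) :=
    fun b => ⟨(0, b, 0), rfl⟩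
  have hinj : ¬ Function.Injective (fun q : ZMod m × ZMod n × ZMod m => q.2.1) :=
    fun h => zero_ne_one (congrArg Prod.fst (h (a₁ := (0, 0, 0)) (a₂ := (1, 0, 0)) rfl))
  exact ⟨fun _ _ => rfl, hsurj,
    not_isSimpleSolution_of_surjective_of_not_injective (isYBSolution_shift 1) _ hsurj hinj
      fun _ _ => rfl⟩
end

section
/- Let p be prime, n ≥ 1, X = ℤ/(pⁿ) × ℤ/(p) × ℤ/(pⁿ), π : ℤ/(pⁿ) → ℤ/(p) the canonical projection, and σ_{(a,b,c)}(x,y,z) = (x−c, y+π(a−x), z−δ_{a,x−c}δ_{b,y+π(a−x)}). Then for all (a,b,c),(x,y,z) ∈ X: σ⁻¹_{σ⁻¹_{(a,b,c)}(x,y,z)} ∘ σ⁻¹_{(a,b,c)} = σ⁻¹_{σ⁻¹_{(x,y,z)}(a,b,c)} ∘ σ⁻¹_{(x,y,z)} as maps on X. Consequently (X,r), with r((a,b,c),(x,y,z)) = (σ_{(a,b,c)}(x,y,z), σ⁻¹_{σ_{(a,b,c)}(x,y,z)}(a,b,c)), is an involutive non-degenerate set-theoretic solution of the YBE. -/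
/-- The canonical projection `π : ℤ/(pⁿ) → ℤ/(p)`. -/
def projP (p n : ℕ) (x : ZMod (p ^ n)) : ZMod p := (x.val : ZMod p)

/-- `σ_{(a,b,c)}(x,y,z) = (x−c, y+π(a−x), z−δ_{a,x−c}·δ_{b,y+π(a−x)})`
on `X = ℤ/(pⁿ) × ℤ/(p) × ℤ/(pⁿ)`, with the Kronecker deltas valued in `ℤ/(pⁿ)`. -/
def sigmaPN (p n : ℕ) (a q : ZMod (p ^ n) × ZMod p × ZMod (p ^ n)) :
    ZMod (p ^ n) × ZMod p × ZMod (p ^ n) :=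
  (q.1 - a.2.2, q.2.1 + projP p n (a.1 - q.1),
    q.2.2 - (if a.1 = q.1 - a.2.2 then (1 : ZMod (p ^ n)) else 0) *
      (if a.2.1 = q.2.1 + projP p n (a.1 - q.1) then 1 else 0))

/-- `σ⁻¹_{(a,b,c)}(x,y,z) = (x+c, y+π(x+c−a), z+δ_{a,x}·δ_{b,y})`. -/
def sigmaPNInv (p n : ℕ) (a q : ZMod (p ^ n) × ZMod p × ZMod (p ^ n)) :
    ZMod (p ^ n) × ZMod p × ZMod (p ^ n) :=
  (q.1 + a.2.2, q.2.1 + projP p n (q.1 + a.2.2 - a.1),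
    q.2.2 + (if a.1 = q.1 then (1 : ZMod (p ^ n)) else 0) *
      (if a.2.1 = q.2.1 then 1 else 0))

lemma projP_hom {p n : ℕ} (hp : p.Prime) (hn : 1 ≤ n) :
    projP p n = ⇑(ZMod.castHom (dvd_pow_self p (by omega : n ≠ 0)) (ZMod p)) := by
  haveI : NeZero (p^n) := ⟨pow_ne_zero n hp.pos.ne'⟩
  funext x
  rw [ZMod.castHom_apply, projP, ZMod.natCast_val]

set_option maxHeartbeats 1000000 in
lemma cycle {p n : ℕ} (hp : p.Prime) (hn : 1 ≤ n)
    (a q : ZMod (p ^ n) × ZMod p × ZMod (p ^ n)) :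
      (sigmaPNInv p n (sigmaPNInv p n a q)) ∘ (sigmaPNInv p n a) =
        (sigmaPNInv p n (sigmaPNInv p n q a)) ∘ (sigmaPNInv p n q) := by
  obtain ⟨a1, a2, a3⟩ := a
  obtain ⟨q1, q2, q3⟩ := q
  funext w
  obtain ⟨w1, w2, w3⟩ := w
  simp only [Function.comp, sigmaPNInv, projP_hom hp hn, map_add, map_sub, map_one,
    Prod.mk.injEq]
  refine ⟨?_, ?_, ?_⟩ <;>
    · split_ifs <;> first | ring1 | (simp_all [add_left_inj, add_right_inj]; try ring1)

set_option maxHeartbeats 1000000 in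
lemma rho_sigma {p n : ℕ} (hp : p.Prime) (hn : 1 ≤ n)
    (a w : ZMod (p ^ n) × ZMod p × ZMod (p ^ n)) :
    sigmaPNInv p n a (sigmaPN p n a w) = w := by
  obtain ⟨a1, a2, a3⟩ := a
  obtain ⟨w1, w2, w3⟩ := w
  simp only [sigmaPN, sigmaPNInv, projP_hom hp hn, map_add, map_sub, map_one, Prod.mk.injEq]
  refine ⟨?_, ?_, ?_⟩ <;>
    · first | ring1 | (split_ifs <;> first | ring1 | (simp_all [add_left_inj, add_right_inj]; try ring1))

set_option maxHeartbeats 1000000 in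
lemma sigma_rho {p n : ℕ} (hp : p.Prime) (hn : 1 ≤ n)
    (a w : ZMod (p ^ n) × ZMod p × ZMod (p ^ n)) :
    sigmaPN p n a (sigmaPNInv p n a w) = w := by
  obtain ⟨a1, a2, a3⟩ := a
  obtain ⟨w1, w2, w3⟩ := w
  simp only [sigmaPN, sigmaPNInv, projP_hom hp hn, map_add, map_sub, map_one, Prod.mk.injEq]
  refine ⟨?_, ?_, ?_⟩ <;>
    · first | ring1 | (split_ifs <;> first | ring1 | (simp_all [add_left_inj, add_right_inj]; try ring1))

lemma keyC {p n : ℕ} (hp : p.Prime) (hn : 1 ≤ n)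
    (a b w : ZMod (p ^ n) × ZMod p × ZMod (p ^ n)) :
    sigmaPN p n a (sigmaPN p n (sigmaPNInv p n a b) w) =
      sigmaPN p n b (sigmaPN p n (sigmaPNInv p n b a) w) := by
  set u := sigmaPN p n a (sigmaPN p n (sigmaPNInv p n a b) w) with hu
  have h := congrFun (cycle hp hn a b) u
  simp only [Function.comp] at h
  rw [hu, rho_sigma hp hn, rho_sigma hp hn] at h
  -- h : w = sigmaPNInv p n (sigmaPNInv p n b a) (sigmaPNInv p n b u)
  rw [h, sigma_rho hp hn, sigma_rho hp hn]

lemma keyC' {p n : ℕ} (hp : p.Prime) (hn : 1 ≤ n)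
    (a c w : ZMod (p ^ n) × ZMod p × ZMod (p ^ n)) :
    sigmaPN p n (sigmaPN p n a c)
        (sigmaPN p n (sigmaPNInv p n (sigmaPN p n a c) a) w) =
      sigmaPN p n a (sigmaPN p n c w) := by
  have h := keyC hp hn a (sigmaPN p n a c) w
  rw [rho_sigma hp hn] at h
  exact h.symm

def DDel (p n : ℕ) (a q : ZMod (p ^ n) × ZMod p × ZMod (p ^ n)) : ZMod (p ^ n) :=
  if a.1 = q.1 - a.2.2 ∧ a.2.1 = q.2.1 + projP p n (a.1 - q.1) then 1 else 0

set_option maxHeartbeats 1000000 in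
lemma tau_spec {p n : ℕ} (hp : p.Prime) (hn : 1 ≤ n)
    (a q : ZMod (p ^ n) × ZMod p × ZMod (p ^ n)) :
    sigmaPNInv p n (sigmaPN p n a q) a =
      (a.1 + q.2.2 - DDel p n a q,
        a.2.1 + projP p n (a.1 + a.2.2 + q.2.2 - DDel p n a q - q.1),
        a.2.2 + DDel p n a q) := by
  obtain ⟨a1, a2, a3⟩ := a
  obtain ⟨q1, q2, q3⟩ := q
  simp only [sigmaPN, sigmaPNInv, DDel, projP_hom hp hn, map_add, map_sub, map_one, map_zero,
    Prod.mk.injEq]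
  refine ⟨?_, ?_, ?_⟩ <;>
    · first | ring1 | (split_ifs <;> first | ring1 |
        (simp_all [add_left_inj, add_right_inj]; try ring1))

set_option maxHeartbeats 1000000 in
lemma tau_inj {p n : ℕ} (hp : p.Prime) (hn : 1 ≤ n)
    (q : ZMod (p ^ n) × ZMod p × ZMod (p ^ n)) :
    Function.Injective fun a => sigmaPNInv p n (sigmaPN p n a q) a := by
  intro a a' h
  obtain ⟨a1, a2, a3⟩ := a
  obtain ⟨b1, b2, b3⟩ := a'
  obtain ⟨q1, q2, q3⟩ := q
  simp only [tau_spec hp hn] at h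
  simp only [DDel, projP_hom hp hn, map_add, map_sub, Prod.mk.injEq] at h
  obtain ⟨h1, h2, h3⟩ := h
  simp only [Prod.mk.injEq]
  split_ifs at h1 h2 h3 with hca hcb hcb2
  · have e1 : a1 = b1 := by linear_combination h1
    have e3 : a3 = b3 := by linear_combination h3
    rw [e1, e3] at h2
    exact ⟨e1, by linear_combination h2, e3⟩
  · exfalso
    have e1 : b1 = a1 - 1 := by linear_combination -h1
    have e3 : b3 = a3 + 1 := by linear_combination -h3
    subst e1 e3
    simp only [map_one, map_zero, map_sub, map_add] at h2
    have e2 : b2 = a2 - 1 := by linear_combination -h2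
    subst e2
    exact hcb ⟨by linear_combination hca.1,
      by simp only [map_sub, map_one]; linear_combination hca.2⟩
  · exfalso
    have e1 : b1 = a1 + 1 := by linear_combination -h1
    have e3 : b3 = a3 - 1 := by linear_combination -h3
    subst e1 e3
    simp only [map_one, map_zero, map_sub, map_add] at h2
    have e2 : b2 = a2 + 1 := by linear_combination -h2
    subst e2
    have hb2 := hcb2.2
    simp only [map_add, map_one] at hb2
    exact hca ⟨by linear_combination hcb2.1, by linear_combination hb2⟩
  · have e1 : a1 = b1 := by linear_combination h1
    have e3 : a3 = b3 := by linear_combination h3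
    rw [e1, e3] at h2
    exact ⟨e1, by linear_combination h2, e3⟩

set_option maxHeartbeats 1000000 in
/-- The cycle identity holds; consequently `(X,r)` is an involutive non-degenerate
set-theoretic solution of the YBE. -/
theorem sigmaPN_isSolution (p n : ℕ) (hp : p.Prime) (hn : 1 ≤ n) :
    (∀ a q : ZMod (p ^ n) × ZMod p × ZMod (p ^ n),
      (sigmaPNInv p n (sigmaPNInv p n a q)) ∘ (sigmaPNInv p n a) =
        (sigmaPNInv p n (sigmaPNInv p n q a)) ∘ (sigmaPNInv p n q)) ∧
    IsYBSolution (fun t : (ZMod (p ^ n) × ZMod p × ZMod (p ^ n)) ×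
        (ZMod (p ^ n) × ZMod p × ZMod (p ^ n)) =>
      (sigmaPN p n t.1 t.2, sigmaPNInv p n (sigmaPN p n t.1 t.2) t.1)) := by
  haveI : NeZero p := ⟨hp.pos.ne'⟩
  haveI : NeZero (p ^ n) := ⟨pow_ne_zero n hp.pos.ne'⟩
  refine ⟨fun a q => cycle hp hn a q, ?_, ?_, ?_, ?_⟩
  · -- left non-degeneracy
    intro x
    exact Function.bijective_iff_has_inverse.mpr
      ⟨sigmaPNInv p n x, fun w => rho_sigma hp hn x w, fun w => sigma_rho hp hn x w⟩
  · -- right non-degeneracy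
    intro q
    exact Finite.injective_iff_bijective.mp (tau_inj hp hn q)
  · -- involutivity
    funext t
    obtain ⟨a, q⟩ := t
    simp only [Function.comp_apply, id_eq, sigma_rho hp hn, rho_sigma hp hn]
  · -- braid relation
    funext t
    obtain ⟨x, y, z⟩ := t
    have comp1 := keyC' hp hn x y z
    have h' := keyC' hp hn x (sigmaPN p n y z) (sigmaPNInv p n (sigmaPN p n y z) y)
    rw [sigma_rho hp hn] at h'
    have comp2 : sigmaPNInv p n
          (sigmaPN p n (sigmaPN p n x y)
            (sigmaPN p n (sigmaPNInv p n (sigmaPN p n x y) x) z)) (sigmaPN p n x y) =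
        sigmaPN p n (sigmaPNInv p n (sigmaPN p n x (sigmaPN p n y z)) x)
          (sigmaPNInv p n (sigmaPN p n y z) y) := by
      rw [comp1, ← h', rho_sigma hp hn]
    have e1 : sigmaPN p n (sigmaPNInv p n (sigmaPN p n x y) x) z =
        sigmaPNInv p n (sigmaPN p n x y) (sigmaPN p n x (sigmaPN p n y z)) := by
      rw [← comp1, rho_sigma hp hn]
    have e2 : sigmaPN p n (sigmaPNInv p n (sigmaPN p n x (sigmaPN p n y z)) x)
          (sigmaPNInv p n (sigmaPN p n y z) y) =
        sigmaPNInv p n (sigmaPN p n x (sigmaPN p n y z)) (sigmaPN p n x y) := by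
      rw [← h', rho_sigma hp hn]
    have comp3 : sigmaPNInv p n
          (sigmaPN p n (sigmaPNInv p n (sigmaPN p n x y) x) z)
          (sigmaPNInv p n (sigmaPN p n x y) x) =
        sigmaPNInv p n
          (sigmaPN p n (sigmaPNInv p n (sigmaPN p n x (sigmaPN p n y z)) x)
            (sigmaPNInv p n (sigmaPN p n y z) y))
          (sigmaPNInv p n (sigmaPN p n x (sigmaPN p n y z)) x) := by
      rw [e1, e2]
      simpa using congrFun
        (cycle hp hn (sigmaPN p n x y) (sigmaPN p n x (sigmaPN p n y z))) x
    simp only [Function.comp_apply]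
    exact Prod.ext comp1 (Prod.ext comp2 comp3)
end

section
/- Let p be prime, n ≥ 1, X = ℤ/(pⁿ) × ℤ/(p) × ℤ/(pⁿ), and σ_{(a,b,c)}(x,y,z) = (x−c, y+π(a−x), z−δ_{a,x−c}δ_{b,y+π(a−x)}). The group ⟨σ_{(a,b,c)} : (a,b,c) ∈ X⟩ acts transitively on X, i.e. the solution (X,r) is indecomposable. -/
/-!
The generators move the three coordinates independently: `σ_{(x,0,x-x')}` sends `(x,y,z)` to
`(x',y,z)`, `σ_{(x+1,0,0)}` sends it to `(x,y+1,z)` and `σ_{(x,y,0)}` to `(x,y,z-1)`. Since `1`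
generates both `ℤ/(p)` and `ℤ/(pⁿ)`, the orbit of any point is everything. Each `σ_a` is a
permutation because it is injective (read off `x`, then `y`, then `z`) on a finite set.
-/

open Function Equiv

lemma Subgroup.equivalence_exists_mem_apply_eq {α : Type*} (H : Subgroup (Perm α)) :
    Equivalence fun u v : α => ∃ g ∈ H, g u = v where
  refl u := ⟨1, H.one_mem, rfl⟩
  symm := by
    rintro u _ ⟨g, hg, rfl⟩
    exact ⟨g⁻¹, H.inv_mem hg, by simp⟩
  trans := by
    rintro u _ _ ⟨g, hg, rfl⟩ ⟨g', hg', rfl⟩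
    exact ⟨g' * g, H.mul_mem hg' hg, rfl⟩

lemma ZMod.rel_of_rel_add_one {m : ℕ} {r : ZMod m → ZMod m → Prop} (hr : Equivalence r)
    (h : ∀ y, r y (y + 1)) (y y' : ZMod m) : r y y' := by
  suffices ∀ k : ℤ, r y (y + k) by
    obtain ⟨k, hk⟩ := ZMod.intCast_surjective (y' - y)
    simpa [hk] using this k
  intro k
  induction k using Int.induction_on with
  | zero => simpa using hr.refl y
  | succ k ih => simpa [add_assoc] using hr.trans ih (h _)
  | pred k ih =>
    have hk := h (y + ((-k - 1 : ℤ) : ZMod m))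
    rw [show y + ((-k - 1 : ℤ) : ZMod m) + 1 = y + ((-k : ℤ) : ZMod m) by push_cast; ring] at hk
    exact hr.trans ih (hr.symm hk)

section SigmaPN

variable (p n : ℕ)

local notation "X" => ZMod (p ^ n) × ZMod p × ZMod (p ^ n)

lemma projP_zero : projP p n 0 = 0 := by
  simp [projP]

lemma projP_one [Fact (1 < p ^ n)] : projP p n 1 = 1 := by
  simp [projP, ZMod.val_one]

lemma sigmaPN_injective (a : X) : Injective (sigmaPN p n a) := by
  rintro ⟨x, y, z⟩ ⟨x', y', z'⟩ h
  simp only [sigmaPN, Prod.mk.injEq] at h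
  obtain ⟨hx, hy, hz⟩ := h
  obtain rfl : x = x' := sub_left_injective hx
  obtain rfl : y = y' := add_right_cancel hy
  simpa using hz

noncomputable def sigmaPNPerm [NeZero p] (a : X) : Perm X :=
  Equiv.ofBijective _ (Finite.injective_iff_bijective.1 (sigmaPN_injective p n a))

def SigmaPNReachable (u v : X) : Prop :=
  ∃ g ∈ Subgroup.closure {g : Perm X | ∃ a, ∀ q, g q = sigmaPN p n a q}, g u = v

lemma sigmaPNReachable_equivalence : Equivalence (SigmaPNReachable p n) :=
  Subgroup.equivalence_exists_mem_apply_eq _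

variable {p n}

lemma sigmaPNReachable_sigmaPN [NeZero p] (a u : X) :
    SigmaPNReachable p n u (sigmaPN p n a u) :=
  ⟨sigmaPNPerm p n a, Subgroup.subset_closure ⟨a, fun _ => rfl⟩, rfl⟩

lemma sigmaPNReachable_fst [NeZero p] (x x' : ZMod (p ^ n)) (y : ZMod p) (z : ZMod (p ^ n)) :
    SigmaPNReachable p n (x, y, z) (x', y, z) := by
  by_cases hx : x = x'
  · exact hx ▸ (sigmaPNReachable_equivalence p n).refl _
  · simpa [sigmaPN, projP_zero, hx] using sigmaPNReachable_sigmaPN (x, 0, x - x') (x, y, z)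

lemma sigmaPNReachable_snd_add_one [NeZero p] [Fact (1 < p ^ n)] (x : ZMod (p ^ n)) (y : ZMod p)
    (z : ZMod (p ^ n)) : SigmaPNReachable p n (x, y, z) (x, y + 1, z) := by
  have h := sigmaPNReachable_sigmaPN (x + 1, 0, 0) (x, y, z)
  simp only [sigmaPN, sub_zero, add_sub_cancel_left, projP_one] at h
  simpa using h

lemma sigmaPNReachable_thd_add_one [NeZero p] (x : ZMod (p ^ n)) (y : ZMod p)
    (z : ZMod (p ^ n)) : SigmaPNReachable p n (x, y, z) (x, y, z + 1) :=
  (sigmaPNReachable_equivalence p n).symm <| by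
    simpa [sigmaPN, projP_zero] using sigmaPNReachable_sigmaPN (x, y, 0) (x, y, z + 1)

end SigmaPN

/-- The permutation group `⟨σ_{(a,b,c)}⟩` acts transitively on `X`:
the solution `(X,r)` is indecomposable. -/
theorem sigmaPN_indecomposable (p n : ℕ) (hp : p.Prime) (hn : 1 ≤ n) :
    ∀ u v : ZMod (p ^ n) × ZMod p × ZMod (p ^ n),
      ∃ g ∈ Subgroup.closure
          {g : Equiv.Perm (ZMod (p ^ n) × ZMod p × ZMod (p ^ n)) |
            ∃ a, ∀ q, g q = sigmaPN p n a q},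
        g u = v := by
  have : NeZero p := ⟨hp.ne_zero⟩
  have : Fact (1 < p ^ n) := ⟨Nat.one_lt_pow (by omega) hp.one_lt⟩
  have hR := sigmaPNReachable_equivalence p n
  rintro ⟨x, y, z⟩ ⟨x', y', z'⟩
  have hy := ZMod.rel_of_rel_add_one (hR.comap fun y => (x', y, z))
    (fun y => sigmaPNReachable_snd_add_one x' y z) y y'
  have hz := ZMod.rel_of_rel_add_one (hR.comap fun z => (x', y', z))
    (sigmaPNReachable_thd_add_one x' y') z z'
  exact hR.trans (hR.trans (sigmaPNReachable_fst x x' y z) hy) hz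
end

section
/- Let p be prime, n ≥ 1, X = ℤ/(pⁿ) × ℤ/(p) × ℤ/(pⁿ), and σ_{(a,b,c)}(x,y,z) = (x−c, y+π(a−x), z−δ_{a,x−c}δ_{b,y+π(a−x)}), with the associated solution (X,r). Then (X,r) is a simple solution of the YBE: every epimorphism of solutions f : (X,r) → (Y,s) is either an isomorphism or has |Y| = 1. -/
theorem projP_cast {p n : ℕ} (hp : p.Prime) (hn : 1 ≤ n) (x : ZMod (p ^ n)) :
    projP p n x = ZMod.castHom (dvd_pow_self p (by omega : n ≠ 0)) (ZMod p) x := by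
  haveI : NeZero (p ^ n) := ⟨pow_ne_zero n hp.pos.ne'⟩
  rw [ZMod.castHom_apply, projP, ZMod.natCast_val]

theorem projP_add {p n : ℕ} (hp : p.Prime) (hn : 1 ≤ n) (x y : ZMod (p ^ n)) :
    projP p n (x + y) = projP p n x + projP p n y := by
  rw [projP_cast hp hn, projP_cast hp hn, projP_cast hp hn, map_add]


theorem projP_sub {p n : ℕ} (hp : p.Prime) (hn : 1 ≤ n) (x y : ZMod (p ^ n)) :
    projP p n (x - y) = projP p n x - projP p n y := by
  rw [projP_cast hp hn, projP_cast hp hn, projP_cast hp hn, map_sub]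

theorem projP_zero_s15 {p n : ℕ} (hp : p.Prime) (hn : 1 ≤ n) :
    projP p n (0 : ZMod (p ^ n)) = 0 := by
  rw [projP_cast hp hn, map_zero]

theorem projP_one_s15 {p n : ℕ} (hp : p.Prime) (hn : 1 ≤ n) :
    projP p n (1 : ZMod (p ^ n)) = 1 := by
  rw [projP_cast hp hn, map_one]

theorem projP_surj {p n : ℕ} (hp : p.Prime) (hn : 1 ≤ n) (t : ZMod p) :
    projP p n ((t.val : ZMod (p ^ n))) = t := by
  haveI : NeZero p := ⟨hp.pos.ne'⟩
  have h1 : t.val < p ^ n := lt_of_lt_of_le (ZMod.val_lt t) (by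
    calc p = p ^ 1 := (pow_one p).symm
    _ ≤ p ^ n := Nat.pow_le_pow_right hp.pos hn)
  rw [projP, ZMod.val_cast_of_lt h1, ZMod.natCast_val, ZMod.cast_id]

theorem sigma_apply (p n : ℕ) (a b c x y z : _) :
    sigmaPN p n (a, b, c) (x, y, z) =
      (x - c, y + projP p n (a - x),
        z - (if a = x - c then (1 : ZMod (p ^ n)) else 0) *
          (if b = y + projP p n (a - x) then 1 else 0)) := rfl

theorem sigmaInv_apply (p n : ℕ) (a b c x y z : _) :
    sigmaPNInv p n (a, b, c) (x, y, z) =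
      (x + c, y + projP p n (x + c - a),
        z + (if a = x then (1 : ZMod (p ^ n)) else 0) * (if b = y then 1 else 0)) := rfl

theorem sigma_sigmaInv {p n : ℕ} (hp : p.Prime) (hn : 1 ≤ n) (u q : _) :
    sigmaPN p n u (sigmaPNInv p n u q) = q := by
  obtain ⟨a, b, c⟩ := u; obtain ⟨x, y, z⟩ := q
  rw [sigmaInv_apply, sigma_apply]
  have h1 : x + c - c = x := by ring
  have h2 : y + projP p n (x + c - a) + projP p n (a - (x + c)) = y := by
    rw [add_assoc, ← projP_add hp hn]
    have : x + c - a + (a - (x + c)) = 0 := by ring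
    rw [this]
    have : projP p n (0 : ZMod (p^n)) = 0 := by
      rw [projP_cast hp hn, map_zero]
    rw [this, add_zero]
  rw [h1, h2]
  refine Prod.ext rfl (Prod.ext rfl ?_)
  simp only
  ring

theorem tau_apply {p n : ℕ} (hp : p.Prime) (hn : 1 ≤ n) (a b c a' b' c' x y z : _) :
    sigmaPN p n (a', b', c') (sigmaPNInv p n (a, b, c) (x, y, z)) =
      (x + c - c', y + projP p n (a' - a),
        z + (if a = x then (1 : ZMod (p ^ n)) else 0) * (if b = y then 1 else 0)
          - (if a' = x + c - c' then (1 : ZMod (p ^ n)) else 0) *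
            (if b' = y + projP p n (a' - a) then 1 else 0)) := by
  rw [sigmaInv_apply, sigma_apply]
  have h2 : y + projP p n (x + c - a) + projP p n (a' - (x + c)) = y + projP p n (a' - a) := by
    rw [add_assoc, ← projP_add hp hn]
    congr 2
    ring
  rw [h2]

theorem avoid_two {A B : Type*} [Nontrivial A] [Nontrivial B] [DecidableEq A]
    (x1 x2 : A) (y1 y2 : B) : ∃ x y, (x, y) ≠ (x1, y1) ∧ (x, y) ≠ (x2, y2) := by
  by_cases h : x1 = x2
  · obtain ⟨x, hx⟩ := exists_ne x1
    exact ⟨x, y1, by simp [Prod.ext_iff, hx], by simp [Prod.ext_iff, h ▸ hx]⟩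
  · obtain ⟨y, hy⟩ := exists_ne y1
    exact ⟨x1, y, by simp [Prod.ext_iff, hy], by simp [Prod.ext_iff, h]⟩

section Main

variable {p n : ℕ} {Y : Type} {f : ZMod (p ^ n) × ZMod p × ZMod (p ^ n) → Y}

/-- The tau relation. -/
theorem tau_rel (hp : p.Prime) (hn : 1 ≤ n)
    (hM1 : ∀ u u' q q', f u = f u' → f q = f q' →
      f (sigmaPN p n u q) = f (sigmaPN p n u' q'))
    {a b c a' b' c'} (h : f (a, b, c) = f (a', b', c')) (x y z : _) :
    f (x, y, z) = f (x + c - c', y + projP p n (a' - a),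
        z + (if a = x then (1 : ZMod (p ^ n)) else 0) * (if b = y then 1 else 0)
          - (if a' = x + c - c' then (1 : ZMod (p ^ n)) else 0) *
            (if b' = y + projP p n (a' - a) then 1 else 0)) := by
  have := hM1 (a, b, c) (a', b', c') (sigmaPNInv p n (a, b, c) (x, y, z))
    (sigmaPNInv p n (a, b, c) (x, y, z)) h rfl
  rwa [sigma_sigmaInv hp hn, tau_apply hp hn] at this


theorem zstep_of_pair_eq_c (hp : p.Prime) (hn : 1 ≤ n)
    (hM1 : ∀ u u' q q', f u = f u' → f q = f q' →
      f (sigmaPN p n u q) = f (sigmaPN p n u' q'))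
    {a b c a' b'} (h : f (a, b, c) = f (a', b', c)) (hne : (a, b) ≠ (a', b')) :
    ∃ x0 y0, ∀ z, f (x0, y0, z) = f (x0, y0, z + 1) := by
  haveI : Fact p.Prime := ⟨hp⟩
  haveI : Fact (1 < p) := ⟨hp.one_lt⟩
  by_cases hs0 : projP p n (a' - a) = 0
  · -- direct step at (a,b)
    refine ⟨a, b, fun z => ?_⟩
    have this1 := tau_rel hp hn hM1 h a b z
    have he' : (if a' = a + c - c then (1 : ZMod (p ^ n)) else 0) *
        (if b' = b + projP p n (a' - a) then 1 else 0) = 0 := by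
      by_cases ha : a' = a + c - c
      · have ha2 : a' = a := by rwa [add_sub_cancel_right] at ha
        have hb : b' ≠ b + projP p n (a' - a) := by
          rw [hs0, add_zero]
          intro hb
          exact hne (by rw [ha2, hb])
        rw [if_neg hb, mul_zero]
      · rw [if_neg ha, zero_mul]
    rw [he', sub_zero, if_pos rfl, if_pos rfl, mul_one, add_sub_cancel_right, hs0,
      add_zero] at this1
    exact this1
  · -- chain of length p
    have haa : a' ≠ a := fun hh => hs0 (by rw [hh, sub_self, projP_cast hp hn, map_zero])
    have hpi : projP p n (a' - a) ≠ 0 := hs0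
    have key : ∀ (z : ZMod (p ^ n)) (j : ℕ), j + 1 ≤ p →
        f (a, b, z) = f (a, b + ((j + 1 : ℕ) : ZMod p) * projP p n (a' - a), z + 1) := by
      intro z j
      induction j with
      | zero =>
        intro _
        have this1 := tau_rel hp hn hM1 h a b z
        rw [add_sub_cancel_right, if_neg haa, zero_mul, sub_zero, if_pos rfl, if_pos rfl,
          mul_one] at this1
        rw [Nat.cast_one, one_mul]
        convert this1 using 2
      | succ j ih =>
        intro hj
        have prev := ih (by omega)
        have hjne : ((j + 1 : ℕ) : ZMod p) ≠ 0 := by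
          intro hcast
          have := congrArg ZMod.val hcast
          rw [ZMod.val_cast_of_lt (by omega), ZMod.val_zero] at this
          omega
        have hbne : b ≠ b + ((j + 1 : ℕ) : ZMod p) * projP p n (a' - a) := by
          intro hb
          have : ((j + 1 : ℕ) : ZMod p) * projP p n (a' - a) = 0 := by
            have := hb.symm
            rwa [add_eq_left] at this
          exact (mul_ne_zero hjne hpi) this
        have this1 := tau_rel hp hn hM1 h a
          (b + ((j + 1 : ℕ) : ZMod p) * projP p n (a' - a)) (z + 1)
        rw [add_sub_cancel_right, if_neg haa, zero_mul, sub_zero, if_neg hbne, mul_zero,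
          add_zero] at this1
        rw [prev, this1]
        congr 1
        refine Prod.ext rfl (Prod.ext ?_ rfl)
        show b + ((j + 1 : ℕ) : ZMod p) * projP p n (a' - a) + projP p n (a' - a) =
          b + ((j + 1 + 1 : ℕ) : ZMod p) * projP p n (a' - a)
        push_cast
        ring
    refine ⟨a, b, fun z => ?_⟩
    have hp1 := hp.pos
    have hfin := key z (p - 1) (by omega)
    rw [(by omega : p - 1 + 1 = p), ZMod.natCast_self, zero_mul, add_zero] at hfin
    exact hfin

theorem zstep_of_pair (hp : p.Prime) (hn : 1 ≤ n)
    (hM1 : ∀ u u' q q', f u = f u' → f q = f q' →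
      f (sigmaPN p n u q) = f (sigmaPN p n u' q'))
    {u u'} (h : f u = f u') (hne : u ≠ u') :
    ∃ x0 y0, ∀ z, f (x0, y0, z) = f (x0, y0, z + 1) := by
  haveI : Fact p.Prime := ⟨hp⟩
  haveI : Fact (1 < p) := ⟨hp.one_lt⟩
  haveI : Fact (1 < p ^ n) := ⟨Nat.one_lt_pow (by omega) hp.one_lt⟩
  obtain ⟨a, b, c⟩ := u
  obtain ⟨a', b', c'⟩ := u'
  by_cases hc : c = c'
  · subst hc
    refine zstep_of_pair_eq_c hp hn hM1 h ?_
    intro hab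
    apply hne
    simp_all [Prod.ext_iff]
  · obtain ⟨x, y, hxy1, hxy2⟩ := avoid_two a (a' - c + c') b (b' - projP p n (a' - a))
    have this1 := tau_rel hp hn hM1 h x y 0
    have he : (if a = x then (1 : ZMod (p ^ n)) else 0) * (if b = y then 1 else 0) = 0 := by
      by_cases h1 : a = x
      · have h2 : b ≠ y := fun h2 => hxy1 (by rw [h1, h2])
        rw [if_neg h2, mul_zero]
      · rw [if_neg h1, zero_mul]
    have he' : (if a' = x + c - c' then (1 : ZMod (p ^ n)) else 0) *
        (if b' = y + projP p n (a' - a) then 1 else 0) = 0 := by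
      by_cases h1 : a' = x + c - c'
      · have hx : x = a' - c + c' := by rw [h1]; ring
        have h2 : b' ≠ y + projP p n (a' - a) := by
          intro h2
          exact hxy2 (by rw [hx, eq_sub_of_add_eq h2.symm])
        rw [if_neg h2, mul_zero]
      · rw [if_neg h1, zero_mul]
    rw [he, he', add_zero, sub_zero] at this1
    refine zstep_of_pair_eq_c hp hn hM1 this1 ?_
    intro hh
    apply hc
    have h3 : x = x + c - c' := congrArg Prod.fst hh
    rw [add_sub_assoc, left_eq_add, sub_eq_zero] at h3
    exact h3

theorem zstep_all (hp : p.Prime) (hn : 1 ≤ n)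
    (hM1 : ∀ u u' q q', f u = f u' → f q = f q' →
      f (sigmaPN p n u q) = f (sigmaPN p n u' q'))
    (hz : ∃ x0 y0, ∀ z, f (x0, y0, z) = f (x0, y0, z + 1)) :
    ∀ x y z, f (x, y, z) = f (x, y, z + 1) := by
  haveI : Fact (1 < p) := ⟨hp.one_lt⟩
  obtain ⟨x0, y0, hz⟩ := hz
  intro x1 y1 z
  obtain ⟨a, ha⟩ : ∃ aa : ZMod (p ^ n), projP p n (aa - x0) = y1 - y0 :=
    ⟨((y1 - y0 + projP p n x0).val : ZMod (p ^ n)), by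
      rw [projP_sub hp hn, projP_surj hp hn]; ring⟩
  have hb : (y0 + projP p n (a - x0) + 1 : ZMod p) ≠ y0 + projP p n (a - x0) := by
    intro hh
    rw [add_eq_left] at hh
    exact one_ne_zero hh
  have key := hM1 (a, y0 + projP p n (a - x0) + 1, x0 - x1)
    (a, y0 + projP p n (a - x0) + 1, x0 - x1) (x0, y0, z) (x0, y0, z + 1) rfl (hz z)
  rw [sigma_apply, sigma_apply] at key
  rw [if_neg hb, mul_zero, sub_zero, sub_zero, sub_sub_cancel, ha] at key
  rwa [show y0 + (y1 - y0) = y1 from by ring] at key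

theorem collapse_total (hp : p.Prime) (hn : 1 ≤ n)
    (hM1 : ∀ u u' q q', f u = f u' → f q = f q' →
      f (sigmaPN p n u q) = f (sigmaPN p n u' q'))
    (hex : ∃ u u', u ≠ u' ∧ f u = f u') : ∀ q q', f q = f q' := by
  haveI : Fact p.Prime := ⟨hp⟩
  haveI : Fact (1 < p) := ⟨hp.one_lt⟩
  haveI : NeZero p := ⟨hp.pos.ne'⟩
  haveI : Fact (1 < p ^ n) := ⟨Nat.one_lt_pow (by omega) hp.one_lt⟩
  obtain ⟨u, u', hne, hfu⟩ := hex
  have step := zstep_all hp hn hM1 (zstep_of_pair hp hn hM1 hfu hne)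
  have zfull : ∀ x y z z', f (x, y, z) = f (x, y, z') := by
    have iter : ∀ (k : ℕ) x y z, f (x, y, z) = f (x, y, z + (k : ZMod (p ^ n))) := by
      intro k
      induction k with
      | zero => intro x y z; simp
      | succ k ih =>
        intro x y z
        rw [ih x y z, step x y (z + (k : ZMod (p ^ n)))]
        congr 2
        push_cast
        ring
    intro x y z z'
    have h1 := iter (z' - z).val x y z
    rw [ZMod.natCast_val, ZMod.cast_id, show z + (z' - z) = z' from by ring] at h1
    exact h1
  have E2 : ∀ x x' yy z z', f (x, yy, z) = f (x', yy, z') := by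
    intro x x' yy z z'
    have key := hM1 (x, yy, 0) (x, yy, x - x') (x, yy, z) (x, yy, z)
      (zfull x yy 0 (x - x')) rfl
    rw [sigma_apply, sigma_apply] at key
    simp only [sub_self, projP_zero_s15 hp hn, add_zero, sub_zero, sub_sub_cancel] at key
    exact (zfull _ _ _ _).trans (key.trans (zfull _ _ _ _))
  have E3 : ∀ yy z z', f (0, yy, z) = f (0, yy + 1, z') := by
    intro yy z z'
    have key := hM1 ((0 : ZMod (p ^ n)), yy, (0 : ZMod (p ^ n))) (1, yy, 0)
      ((0 : ZMod (p ^ n)), yy, z) ((0 : ZMod (p ^ n)), yy, z)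
      (E2 0 1 yy 0 0) rfl
    rw [sigma_apply, sigma_apply] at key
    simp only [sub_zero, sub_self, projP_zero_s15 hp hn, projP_one_s15 hp hn, add_zero] at key
    exact (zfull _ _ _ _).trans (key.trans (zfull _ _ _ _))
  have E4 : ∀ (k : ℕ) yy z z', f (0, yy, z) = f (0, yy + (k : ZMod p), z') := by
    intro k
    induction k with
    | zero => intro yy z z'; simpa using zfull 0 yy z z'
    | succ k ih =>
      intro yy z z'
      rw [ih yy z z, E3 (yy + (k : ZMod p)) z z']
      congr 2
      push_cast
      ring
  intro q q'
  obtain ⟨x, y, z⟩ := q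
  obtain ⟨x', y', z'⟩ := q'
  calc f (x, y, z) = f (0, y, z) := E2 x 0 y z z
    _ = f (0, y + ((y' - y).val : ZMod p), z') := E4 (y' - y).val y z z'
    _ = f (x', y', z') := by
        rw [ZMod.natCast_val, ZMod.cast_id, show y + (y' - y) = y' from by ring]
        exact E2 0 x' y' z' z'

theorem main_assembly (p n : ℕ) (hp : p.Prime) (hn : 1 ≤ n) :
    Nontrivial (ZMod (p ^ n) × ZMod p × ZMod (p ^ n)) ∧
    ∀ (Y : Type) (s : Y × Y → Y × Y),
      ∀ f : ZMod (p ^ n) × ZMod p × ZMod (p ^ n) → Y, Function.Surjective f →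
        (∀ x y, f (sigmaPN p n x y) = (s (f x, f y)).1) →
        Function.Bijective f ∨ Subsingleton Y := by
  haveI : Fact (1 < p ^ n) := ⟨Nat.one_lt_pow (by omega) hp.one_lt⟩
  refine ⟨inferInstance, ?_⟩
  intro Y s f hsurj hcompat
  have hM1 : ∀ u u' q q', f u = f u' → f q = f q' →
      f (sigmaPN p n u q) = f (sigmaPN p n u' q') := by
    intro u u' q q' h1 h2
    rw [hcompat u q, hcompat u' q', h1, h2]
  by_cases hinj : Function.Injective f
  · exact Or.inl ⟨hinj, hsurj⟩
  · right
    rw [Function.not_injective_iff] at hinj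
    obtain ⟨u, u', hfu, hne⟩ := hinj
    have htot := collapse_total hp hn hM1 ⟨u, u', hne, hfu⟩
    constructor
    intro t1 t2
    obtain ⟨q1, rfl⟩ := hsurj t1
    obtain ⟨q2, rfl⟩ := hsurj t2
    exact htot q1 q2

/-- `(X,r)` is a simple solution of the YBE: every epimorphism of solutions from `(X,r)`
is either an isomorphism or onto a singleton. -/
theorem sigmaPN_simple (p n : ℕ) (hp : p.Prime) (hn : 1 ≤ n) :
    IsSimpleSolution (fun t : (ZMod (p ^ n) × ZMod p × ZMod (p ^ n)) ×
        (ZMod (p ^ n) × ZMod p × ZMod (p ^ n)) =>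
      (sigmaPN p n t.1 t.2, sigmaPNInv p n (sigmaPN p n t.1 t.2) t.1)) := by
  obtain ⟨h1, h2⟩ := main_assembly p n hp hn
  refine ⟨h1, ?_⟩
  intro Y s hYB f hsurj hcompat
  exact h2 Y s f hsurj hcompat
end Main
end

section
/- Let p be prime, n ≥ 1, X = ℤ/(pⁿ) × ℤ/(p) × ℤ/(pⁿ), and σ_{(a,b,c)}(x,y,z) = (x−c, y+π(a−x), z−δ_{a,x−c}δ_{b,y+π(a−x)}). Then the permutation group G(X,r) = ⟨σ_{(a,b,c)} : (a,b,c) ∈ X⟩ ≤ Sym(X) is a finite p-group. -/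
namespace SigmaPNAux

variable (p n : ℕ)

abbrev XX := ZMod (p ^ n) × ZMod p × ZMod (p ^ n)

/-- The group of "triangular" permutations. -/
def triGroup : Subgroup (Equiv.Perm (XX p n)) where
  carrier := {g | ∃ (α : ZMod (p ^ n)) (f : ZMod (p ^ n) → ZMod p)
      (h : ZMod (p ^ n) → ZMod p → ZMod (p ^ n)),
      ∀ q : XX p n, g q = (q.1 + α, q.2.1 + f q.1, q.2.2 + h q.1 q.2.1)}
  one_mem' := ⟨0, fun _ => 0, fun _ _ => 0, fun q => by simp⟩
  mul_mem' := by
    rintro a b ⟨α, f, h, ha⟩ ⟨α', f', h', hb⟩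
    refine ⟨α' + α, fun x => f' x + f (x + α'), fun x y => h' x y + h (x + α') (y + f' x),
      fun q => ?_⟩
    obtain ⟨x, y, z⟩ := q
    rw [Equiv.Perm.mul_apply, hb, ha]
    simp only [Prod.mk.injEq]
    refine ⟨by ring, by ring, by ring⟩
  inv_mem' := by
    rintro g ⟨α, f, h, hg⟩
    refine ⟨-α, fun x => -f (x - α), fun x y => -h (x - α) (y - f (x - α)), fun q => ?_⟩
    obtain ⟨x, y, z⟩ := q
    have h0 : g⁻¹ (x, y, z) = g.symm (x, y, z) := rfl
    rw [h0, Equiv.symm_apply_eq, hg]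
    simp only [Prod.mk.injEq]
    refine ⟨by ring, by ring, by ring⟩

variable {p n}

theorem pow_mem_step1 (g : Equiv.Perm (XX p n)) (α : ZMod (p ^ n))
    (f : ZMod (p ^ n) → ZMod p) (h : ZMod (p ^ n) → ZMod p → ZMod (p ^ n))
    (hg : ∀ q : XX p n, g q = (q.1 + α, q.2.1 + f q.1, q.2.2 + h q.1 q.2.1)) :
    ∀ k : ℕ, ∃ (F : ZMod (p ^ n) → ZMod p) (H : ZMod (p ^ n) → ZMod p → ZMod (p ^ n)),
      ∀ q : XX p n, (g ^ k) q = (q.1 + k • α, q.2.1 + F q.1, q.2.2 + H q.1 q.2.1) := by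
  intro k
  induction k with
  | zero => exact ⟨fun _ => 0, fun _ _ => 0, fun q => by simp⟩
  | succ k ih =>
    obtain ⟨F, H, ih⟩ := ih
    refine ⟨fun x => f x + F (x + α), fun x y => h x y + H (x + α) (y + f x), fun q => ?_⟩
    obtain ⟨x, y, z⟩ := q
    rw [pow_succ, Equiv.Perm.mul_apply, hg, ih]
    simp only [Prod.mk.injEq, succ_nsmul]
    refine ⟨by ring, by ring, by ring⟩

theorem pow_mem_step2 (g : Equiv.Perm (XX p n))
    (f : ZMod (p ^ n) → ZMod p) (h : ZMod (p ^ n) → ZMod p → ZMod (p ^ n))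
    (hg : ∀ q : XX p n, g q = (q.1, q.2.1 + f q.1, q.2.2 + h q.1 q.2.1)) :
    ∀ k : ℕ, ∃ (H : ZMod (p ^ n) → ZMod p → ZMod (p ^ n)),
      ∀ q : XX p n, (g ^ k) q = (q.1, q.2.1 + k • f q.1, q.2.2 + H q.1 q.2.1) := by
  intro k
  induction k with
  | zero => exact ⟨fun _ _ => 0, fun q => by simp⟩
  | succ k ih =>
    obtain ⟨H, ih⟩ := ih
    refine ⟨fun x y => h x y + H x (y + f x), fun q => ?_⟩
    obtain ⟨x, y, z⟩ := q
    rw [pow_succ, Equiv.Perm.mul_apply, hg, ih]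
    simp only [Prod.mk.injEq, succ_nsmul]
    refine ⟨?_, ?_, ?_⟩ <;> first | trivial | ring

theorem pow_mem_step3 (g : Equiv.Perm (XX p n))
    (h : ZMod (p ^ n) → ZMod p → ZMod (p ^ n))
    (hg : ∀ q : XX p n, g q = (q.1, q.2.1, q.2.2 + h q.1 q.2.1)) :
    ∀ (k : ℕ) (q : XX p n), (g ^ k) q = (q.1, q.2.1, q.2.2 + k • h q.1 q.2.1) := by
  intro k
  induction k with
  | zero => intro q; simp
  | succ k ih =>
    intro q
    obtain ⟨x, y, z⟩ := q
    rw [pow_succ, Equiv.Perm.mul_apply, hg, ih]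
    simp only [Prod.mk.injEq, succ_nsmul]
    refine ⟨?_, ?_, ?_⟩ <;> first | trivial | ring

/-- Every triangular permutation satisfies `g ^ p ^ (2n+1) = 1`. -/
theorem tri_pow_eq_one (g : Equiv.Perm (XX p n)) (hg : g ∈ triGroup p n) :
    g ^ p ^ (2 * n + 1) = 1 := by
  obtain ⟨α, f, h, hg⟩ := hg
  obtain ⟨F, H, h1⟩ := pow_mem_step1 g α f h hg (p ^ n)
  have e1 : ∀ q : XX p n, (g ^ p ^ n) q = (q.1, q.2.1 + F q.1, q.2.2 + H q.1 q.2.1) := by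
    intro q
    rw [h1 q]
    have h0 : (p ^ n : ℕ) • α = 0 := by
      simp [nsmul_eq_mul, ZMod.natCast_self]
    rw [h0, add_zero]
  obtain ⟨H2, h2⟩ := pow_mem_step2 (g ^ p ^ n) F H e1 p
  have e2 : ∀ q : XX p n, ((g ^ p ^ n) ^ p) q = (q.1, q.2.1, q.2.2 + H2 q.1 q.2.1) := by
    intro q
    rw [h2 q]
    have h0 : (p : ℕ) • F q.1 = 0 := by
      simp [nsmul_eq_mul, ZMod.natCast_self]
    rw [h0, add_zero]
  have e3 := pow_mem_step3 ((g ^ p ^ n) ^ p) H2 e2 (p ^ n)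
  have key : ((g ^ p ^ n) ^ p) ^ p ^ n = 1 := by
    apply Equiv.ext
    intro q
    rw [e3 q]
    have h0 : (p ^ n : ℕ) • H2 q.1 q.2.1 = 0 := by
      simp [nsmul_eq_mul, ZMod.natCast_self]
    rw [h0, add_zero]
    rfl
  have hmul : ((g ^ p ^ n) ^ p) ^ p ^ n = g ^ p ^ (2 * n + 1) := by
    rw [← pow_mul, ← pow_mul]
    congr 1
    ring
  rw [← hmul, key]

end SigmaPNAux

/-- The permutation group `G(X,r) = ⟨σ_{(a,b,c)} : (a,b,c) ∈ X⟩ ≤ Sym(X)` is a finite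
`p`-group. -/
theorem sigmaPN_permGroup_isPGroup (p n : ℕ) (hp : p.Prime) (hn : 1 ≤ n) :
    Finite (Subgroup.closure
        {g : Equiv.Perm (ZMod (p ^ n) × ZMod p × ZMod (p ^ n)) |
          ∃ a, ∀ q, g q = sigmaPN p n a q}) ∧
    IsPGroup p (Subgroup.closure
        {g : Equiv.Perm (ZMod (p ^ n) × ZMod p × ZMod (p ^ n)) |
          ∃ a, ∀ q, g q = sigmaPN p n a q}) := by
  haveI : NeZero p := ⟨hp.ne_zero⟩
  haveI : NeZero (p ^ n) := ⟨pow_ne_zero n hp.ne_zero⟩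
  constructor
  · infer_instance
  · have hsub : {g : Equiv.Perm (ZMod (p ^ n) × ZMod p × ZMod (p ^ n)) |
          ∃ a, ∀ q, g q = sigmaPN p n a q} ⊆ (SigmaPNAux.triGroup p n : Set _) := by
      rintro g ⟨a, ha⟩
      refine ⟨-a.2.2, fun x => projP p n (a.1 - x),
        fun x y => -((if a.1 = x - a.2.2 then (1 : ZMod (p ^ n)) else 0) *
          (if a.2.1 = y + projP p n (a.1 - x) then 1 else 0)), fun q => ?_⟩
      obtain ⟨x, y, z⟩ := q
      rw [ha]
      simp only [sigmaPN, Prod.mk.injEq]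
      refine ⟨?_, ?_, ?_⟩ <;> first | trivial | ring
    have hle : Subgroup.closure _ ≤ SigmaPNAux.triGroup p n := (Subgroup.closure_le _).mpr hsub
    rintro ⟨g, hg⟩
    refine ⟨2 * n + 1, ?_⟩
    have h1 := SigmaPNAux.tri_pow_eq_one g (hle hg)
    exact Subtype.ext (by push_cast; exact h1)
end
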